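/- For every directed graph G, the Sperner capacity can be computed via maximal acyclic induced subgraphs of strong powers: Σ(G) = lim_{n→∞} (1/n) log ρ(G^n), where ρ(H) is the maximum cardinality of a subset of V(H) inducing an acyclic subgraph; moreover the limit exists and equals sup_n (1/n) log ρ(G^n). -/

import Mathlib

/-!
Independent sets are acyclic, so `α(Gⁿ) ≤ ρ(Gⁿ)`. Conversely, an acyclic set `A` of `Gᵐ`
carries a rank function `A → {0, …, |A| - 1}` that increases along edges. On
`Aᵏ ⊆ (Gᵐ)ᵏ ≅ G^{km}` the total rank strictly increases along edges, so its fibres are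
independent and `ρ(Gᵐ)ᵏ ≤ k ρ(Gᵐ) α(G^{km})`; after taking `k`-th roots the polynomial factor
disappears as `k → ∞`. Finally `(1/n) log ρ(Gⁿ)` is squeezed between `Σ(G)` and
`(1/n) log α(Gⁿ)`, which tends to `Σ(G)` by Fekete's lemma since `α` is supermultiplicative.
-/

open Real Filter

/-- Adjacency relation of the `n`-fold strong power of the directed graph with
adjacency relation `E`: there is an edge from `x` to `y` iff `x ≠ y` and in each
coordinate `j` either `x j = y j` or there is an edge from `x j` to `y j`. -/
def strongPow {V : Type*} (E : V → V → Prop) (n : ℕ) (x y : Fin n → V) : Prop :=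
  x ≠ y ∧ ∀ j, x j = y j ∨ E (x j) (y j)

/-- `l` is a directed cycle of the graph `E` all of whose vertices lie in `A`:
a list of at least two distinct vertices with an edge between consecutive
vertices and an edge from the last vertex back to the first. -/
def IsCycleIn {V : Type*} (E : V → V → Prop) (A : Set V) (l : List V) : Prop :=
  2 ≤ l.length ∧ l.Nodup ∧ (∀ x ∈ l, x ∈ A) ∧ l.Chain' E ∧
    ∀ x ∈ l.head?, ∀ y ∈ l.getLast?, E y x

/-- The subgraph of `E` induced by `A` is acyclic. -/
def AcyclicOn {V : Type*} (E : V → V → Prop) (A : Set V) : Prop :=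
  ¬ ∃ l : List V, IsCycleIn E A l

/-- `α(G)`: the maximum cardinality of an independent set in the graph `E`. -/
noncomputable def alphaOf {V : Type*} [Fintype V] (E : V → V → Prop) : ℕ :=
  sSup {k : ℕ | ∃ A : Finset V, (∀ x ∈ A, ∀ y ∈ A, ¬ E x y) ∧ A.card = k}

/-- `ρ(G)`: the maximum cardinality of a subset of vertices inducing an acyclic
subgraph of `E`. -/
noncomputable def rhoOf {V : Type*} [Fintype V] (E : V → V → Prop) : ℕ :=
  sSup {k : ℕ | ∃ A : Finset V, AcyclicOn E ↑A ∧ A.card = k}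

/-- The Sperner capacity `Σ(G) = lim_n (1/n) log α(Gⁿ) = sup_n (1/n) log α(Gⁿ)`
of the graph `E` (natural logarithms). -/
noncomputable def spernerCap {V : Type*} [Fintype V] (E : V → V → Prop) : ℝ :=
  sSup {x : ℝ | ∃ n : ℕ, 1 ≤ n ∧ x = Real.log (alphaOf (strongPow E n)) / n}

open Topology

section Acyclic

variable {W : Type*} {R : W → W → Prop}

def IsPathIn (R : W → W → Prop) (A : Set W) (l : List W) : Prop :=
  l.Nodup ∧ (∀ x ∈ l, x ∈ A) ∧ l.IsChain R

theorem AcyclicOn.mono {A B : Set W} (hB : AcyclicOn R B) (hAB : A ⊆ B) : AcyclicOn R A :=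
  fun ⟨l, hlen, hnd, hmem, hch, hcl⟩ => hB ⟨l, hlen, hnd, fun x hx => hAB (hmem x hx), hch, hcl⟩

theorem acyclicOn_of_forall_not_rel {A : Set W} (hA : ∀ x ∈ A, ∀ y ∈ A, ¬ R x y) :
    AcyclicOn R A := by
  rintro ⟨_ | ⟨a, _ | ⟨b, l⟩⟩, hlen, -, hmem, hch, -⟩
  · simp at hlen
  · simp at hlen
  · exact hA a (hmem a (by simp)) b (hmem b (by simp)) (List.isChain_cons_cons.mp hch).1

theorem IsPathIn.cons (hR : ∀ x, ¬ R x x) {A : Set W} (hA : AcyclicOn R A) {a y : W}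
    {l : List W} (hl : IsPathIn R A (a :: l)) (hy : y ∈ A) (hya : R y a) :
    IsPathIn R A (y :: a :: l) := by
  obtain ⟨hnd, hmem, hch⟩ := hl
  have hyl : y ∉ a :: l := by
    intro hyl
    obtain ⟨i, hi, rfl⟩ := List.getElem_of_mem hyl
    have hi0 : i ≠ 0 := by rintro rfl; exact hR a hya
    -- the part of the path up to `y` closes up to a cycle through the edge `y → a`
    refine hA ⟨(a :: l).take (i + 1), ?_, hnd.sublist (List.take_sublist _ _),
      fun x hx => hmem x (List.mem_of_mem_take hx), hch.take _, ?_⟩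
    · simp only [List.length_take, List.length_cons] at hi ⊢
      omega
    · rw [List.getLast?_take, if_neg (Nat.succ_ne_zero i), Nat.add_sub_cancel,
        List.getElem?_eq_getElem hi, Option.some_or]
      simpa using hya
  exact ⟨List.nodup_cons.mpr ⟨hyl, hnd⟩, List.forall_mem_cons.mpr ⟨hy, hmem⟩,
    hch.cons (by simpa using hya)⟩

theorem AcyclicOn.exists_source (hR : ∀ x, ¬ R x x) {A : Finset W} (hA : AcyclicOn R ↑A)
    (hne : A.Nonempty) : ∃ x ∈ A, ∀ y ∈ A, ¬ R y x := by
  classical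
  by_contra! h
  obtain ⟨a, ha⟩ := hne
  have hpath : ∀ n, ∃ b l, IsPathIn R ↑A (b :: l) ∧ l.length = n := by
    intro n
    induction n with
    | zero =>
      exact ⟨a, [], ⟨List.nodup_singleton a, by simpa using ha, List.isChain_singleton a⟩, rfl⟩
    | succ n ih =>
      obtain ⟨b, l, hl, rfl⟩ := ih
      obtain ⟨y, hy, hyb⟩ := h b (hl.2.1 b (by simp))
      exact ⟨y, b :: l, hl.cons hR hA hy hyb, rfl⟩
  obtain ⟨b, l, ⟨hnd, hmem, -⟩, hlen⟩ := hpath A.card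
  have hsub : (b :: l).toFinset ⊆ A := fun x hx => hmem x (List.mem_toFinset.mp hx)
  have := Finset.card_le_card hsub
  rw [List.toFinset_card_of_nodup hnd, List.length_cons] at this
  omega

theorem AcyclicOn.exists_rank (hR : ∀ x, ¬ R x x) {A : Finset W} (hA : AcyclicOn R ↑A) :
    ∃ f : W → ℕ, (∀ x ∈ A, f x < A.card) ∧ ∀ x ∈ A, ∀ y ∈ A, R x y → f x < f y := by
  classical
  induction A using Finset.strongInduction with
  | H A ih =>
  rcases A.eq_empty_or_nonempty with rfl | hne
  · exact ⟨0, by simp, by simp⟩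
  obtain ⟨s, hs, hsrc⟩ := hA.exists_source hR hne
  obtain ⟨f, hf_lt, hf⟩ := ih (A.erase s) (Finset.erase_ssubset hs)
    (hA.mono (by simp [Finset.coe_erase]))
  have hcard : (A.erase s).card + 1 = A.card := Finset.card_erase_add_one hs
  refine ⟨fun x => if x = s then 0 else f x + 1, fun x hx => ?_, fun x hx y hy hxy => ?_⟩
  · dsimp only
    split_ifs with hxs
    · omega
    · have := hf_lt x (Finset.mem_erase.mpr ⟨hxs, hx⟩)
      omega
  · have hys : y ≠ s := by rintro rfl; exact hsrc x hx hxy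
    simp only [if_neg hys]
    split_ifs with hxs
    · omega
    · have := hf x (Finset.mem_erase.mpr ⟨hxs, hx⟩) y (Finset.mem_erase.mpr ⟨hys, hy⟩) hxy
      omega

theorem sum_rank_lt_of_strongPow {A : Finset W} {f : W → ℕ}
    (hf : ∀ x ∈ A, ∀ y ∈ A, R x y → f x < f y) {k : ℕ} {x y : Fin k → W} (hx : ∀ i, x i ∈ A)
    (hy : ∀ i, y i ∈ A) (hxy : strongPow R k x y) : ∑ i, f (x i) < ∑ i, f (y i) := by
  have hlt : ∀ i, x i ≠ y i → f (x i) < f (y i) :=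
    fun i hi => hf _ (hx i) _ (hy i) ((hxy.2 i).resolve_left hi)
  obtain ⟨i, hi⟩ := Function.ne_iff.mp hxy.1
  refine Finset.sum_lt_sum (fun j _ => ?_) ⟨i, Finset.mem_univ i, hlt i hi⟩
  by_cases hj : x j = y j
  · rw [hj]
  · exact (hlt j hj).le

end Acyclic

section Extremal

variable {W : Type*} [Fintype W] {R : W → W → Prop}

theorem bddAbove_setOf_card (P : Finset W → Prop) :
    BddAbove {k | ∃ A : Finset W, P A ∧ A.card = k} :=
  ⟨Fintype.card W, by rintro k ⟨A, -, rfl⟩; exact A.card_le_univ⟩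

theorem card_le_sSup_setOf_card {P : Finset W → Prop} {A : Finset W} (hA : P A) :
    A.card ≤ sSup {k | ∃ A : Finset W, P A ∧ A.card = k} :=
  le_csSup (bddAbove_setOf_card P) ⟨A, hA, rfl⟩

theorem exists_card_eq_sSup_setOf_card {P : Finset W → Prop} (h : P ∅) :
    ∃ A : Finset W, P A ∧ A.card = sSup {k | ∃ A : Finset W, P A ∧ A.card = k} :=
  Nat.sSup_mem (s := {k | ∃ A : Finset W, P A ∧ A.card = k}) ⟨0, ∅, h, rfl⟩
    (bddAbove_setOf_card P)

theorem sSup_setOf_card_le_card (P : Finset W → Prop) :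
    sSup {k | ∃ A : Finset W, P A ∧ A.card = k} ≤ Fintype.card W :=
  csSup_le' (by rintro k ⟨A, -, rfl⟩; exact A.card_le_univ)

theorem card_le_alphaOf {A : Finset W} (hA : ∀ x ∈ A, ∀ y ∈ A, ¬ R x y) : A.card ≤ alphaOf R :=
  card_le_sSup_setOf_card hA

theorem card_le_rhoOf {A : Finset W} (hA : AcyclicOn R ↑A) : A.card ≤ rhoOf R :=
  card_le_sSup_setOf_card hA

theorem exists_card_eq_alphaOf :
    ∃ A : Finset W, (∀ x ∈ A, ∀ y ∈ A, ¬ R x y) ∧ A.card = alphaOf R :=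
  exists_card_eq_sSup_setOf_card (by simp)

theorem exists_card_eq_rhoOf : ∃ A : Finset W, AcyclicOn R ↑A ∧ A.card = rhoOf R :=
  exists_card_eq_sSup_setOf_card (acyclicOn_of_forall_not_rel (by simp))

theorem alphaOf_le_card (R : W → W → Prop) : alphaOf R ≤ Fintype.card W :=
  sSup_setOf_card_le_card _

theorem rhoOf_le_card (R : W → W → Prop) : rhoOf R ≤ Fintype.card W :=
  sSup_setOf_card_le_card _

theorem alphaOf_le_rhoOf : alphaOf R ≤ rhoOf R := by
  obtain ⟨A, hA, hcard⟩ := exists_card_eq_alphaOf (R := R)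
  exact hcard ▸ card_le_rhoOf (acyclicOn_of_forall_not_rel hA)

theorem alphaOf_le_alphaOf_of_equiv {W' : Type*} [Fintype W'] {R' : W' → W' → Prop} (φ : W ≃ W')
    (h : ∀ x y, R x y → R' (φ x) (φ y)) : alphaOf R' ≤ alphaOf R := by
  obtain ⟨A, hA, hcard⟩ := exists_card_eq_alphaOf (R := R')
  rw [← hcard, ← A.card_map φ.symm.toEmbedding]
  refine card_le_alphaOf ?_
  simp only [Finset.mem_map_equiv, Equiv.symm_symm]
  exact fun x hx y hy hxy => hA _ hx _ hy (h x y hxy)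

theorem rhoOf_pow_le (hR : ∀ x, ¬ R x x) {k : ℕ} (hk : 0 < k) :
    rhoOf R ^ k ≤ k * rhoOf R * alphaOf (strongPow R k) := by
  classical
  obtain ⟨A, hA, hcard⟩ := exists_card_eq_rhoOf (R := R)
  obtain ⟨f, hf_lt, hf⟩ := hA.exists_rank hR
  have hne : (Finset.univ : Finset (Fin k)).Nonempty := Finset.univ_nonempty_iff.mpr ⟨⟨0, hk⟩⟩
  -- the total rank takes fewer than `k * |A|` values on `Aᵏ`, and each of its fibres is independent
  have hmaps : ∀ x ∈ Fintype.piFinset fun _ : Fin k => A,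
      ∑ i, f (x i) ∈ Finset.range (k * rhoOf R) := by
    intro x hx
    rw [Fintype.mem_piFinset] at hx
    simpa [← hcard] using Finset.sum_lt_sum_of_nonempty hne fun i _ => hf_lt _ (hx i)
  have hfibre : ∀ t ∈ Finset.range (k * rhoOf R),
      {x ∈ Fintype.piFinset fun _ : Fin k => A | ∑ i, f (x i) = t}.card ≤
        alphaOf (strongPow R k) := by
    refine fun t _ => card_le_alphaOf fun x hx y hy hxy => ?_
    simp only [Finset.mem_filter, Fintype.mem_piFinset] at hx hy
    exact (sum_rank_lt_of_strongPow hf hx.1 hy.1 hxy).ne (hx.2.trans hy.2.symm)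
  have := Finset.card_le_mul_card_image_of_maps_to hmaps _ hfibre
  rw [Fintype.card_piFinset, Finset.prod_const, Finset.card_univ, Fintype.card_fin, hcard,
    Finset.card_range] at this
  linarith

end Extremal

section StrongPow

variable {V : Type*} {E : V → V → Prop}

theorem strongPow_irrefl (n : ℕ) (x : Fin n → V) : ¬ strongPow E n x x := fun h => h.1 rfl

theorem strongPow_comp {m n : ℕ} {x y : Fin n → V} (h : strongPow E n x y) (φ : Fin m → Fin n)
    (hφ : x ∘ φ ≠ y ∘ φ) : strongPow E m (x ∘ φ) (y ∘ φ) :=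
  ⟨hφ, fun j => h.2 (φ j)⟩

theorem strongPow_append {m n : ℕ} {a a' : Fin m → V} {b b' : Fin n → V}
    (h : strongPow E (m + n) (Fin.append a b) (Fin.append a' b')) :
    strongPow E m a a' ∨ strongPow E n b b' := by
  have hl : ∀ a b, Fin.append a b ∘ Fin.castAdd n = (a : Fin m → V) := fun a b => by
    funext i; simp
  have hr : ∀ a b, Fin.append a b ∘ Fin.natAdd m = (b : Fin n → V) := fun a b => by
    funext i; simp
  by_cases ha : a = a'
  · subst ha
    have hb : b ≠ b' := by rintro rfl; exact h.1 rfl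
    right
    simpa only [hr] using strongPow_comp h (Fin.natAdd m) (by simpa only [hr] using hb)
  · left
    simpa only [hl] using strongPow_comp h (Fin.castAdd n) (by simpa only [hl] using ha)

def blockEquiv (V : Type*) (k m : ℕ) : (Fin (k * m) → V) ≃ (Fin k → Fin m → V) :=
  (finProdFinEquiv.arrowCongr (Equiv.refl V)).symm.trans (Equiv.curry _ _ _)

theorem strongPow_blockEquiv {k m : ℕ} {w w' : Fin (k * m) → V} (h : strongPow E (k * m) w w') :
    strongPow (strongPow E m) k (blockEquiv V k m w) (blockEquiv V k m w') := by
  refine ⟨(blockEquiv V k m).injective.ne h.1, fun i => ?_⟩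
  by_cases hi : blockEquiv V k m w i = blockEquiv V k m w' i
  · exact Or.inl hi
  · exact Or.inr (strongPow_comp h (fun j => finProdFinEquiv (i, j)) hi)

variable [Fintype V]

theorem alphaOf_strongPow_pos [Nonempty V] (n : ℕ) : 0 < alphaOf (strongPow E n) :=
  card_le_alphaOf (A := {fun _ => Classical.arbitrary V}) (by simp [strongPow_irrefl])

theorem alphaOf_strongPow_mul_le (m n : ℕ) :
    alphaOf (strongPow E m) * alphaOf (strongPow E n) ≤ alphaOf (strongPow E (m + n)) := by
  classical
  obtain ⟨A, hA, hAcard⟩ := exists_card_eq_alphaOf (R := strongPow E m)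
  obtain ⟨B, hB, hBcard⟩ := exists_card_eq_alphaOf (R := strongPow E n)
  rw [← hAcard, ← hBcard, ← Finset.card_product,
    ← Finset.card_map (Fin.appendEquiv m n).toEmbedding]
  refine card_le_alphaOf ?_
  simp only [Finset.mem_map, Finset.mem_product, Equiv.coe_toEmbedding]
  rintro _ ⟨⟨a, b⟩, ⟨ha, hb⟩, rfl⟩ _ ⟨⟨a', b'⟩, ⟨ha', hb'⟩, rfl⟩ h
  rcases strongPow_append h with h | h
  · exact hA a ha a' ha' h
  · exact hB b hb b' hb' h

theorem rhoOf_strongPow_pow_le (m : ℕ) {k : ℕ} (hk : 0 < k) :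
    rhoOf (strongPow E m) ^ k ≤ k * rhoOf (strongPow E m) * alphaOf (strongPow E (k * m)) :=
  (rhoOf_pow_le (strongPow_irrefl m) hk).trans <| Nat.mul_le_mul_left _ <|
    alphaOf_le_alphaOf_of_equiv (blockEquiv V k m) fun _ _ => strongPow_blockEquiv

end StrongPow

section Logarithms

variable {V : Type*} [Fintype V] {E : V → V → Prop}

theorem log_natCast_le_log_natCast {a b : ℕ} (h : a ≤ b) : log a ≤ log b := by
  rcases a.eq_zero_or_pos with rfl | ha
  · simpa using log_natCast_nonneg b
  · exact log_le_log (by exact_mod_cast ha) (by exact_mod_cast h)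

theorem log_alphaOf_strongPow_add_le (m n : ℕ) :
    log (alphaOf (strongPow E m)) + log (alphaOf (strongPow E n)) ≤
      log (alphaOf (strongPow E (m + n))) := by
  rcases isEmpty_or_nonempty V with hV | hV
  · -- every strong power of the empty graph has at most one vertex
    have hzero (n : ℕ) : log (alphaOf (strongPow E n)) = 0 := by
      have h := alphaOf_le_card (strongPow E n)
      rw [Fintype.card_fun, Fintype.card_fin, Fintype.card_eq_zero] at h
      rcases Nat.le_one_iff_eq_zero_or_eq_one.mp (h.trans (pow_le_one₀ le_rfl zero_le_one))
        with h | h <;> simp [h]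
    simp [hzero]
  · have hpos (n : ℕ) : (0 : ℝ) < alphaOf (strongPow E n) := by
      exact_mod_cast alphaOf_strongPow_pos n
    rw [← log_mul (hpos m).ne' (hpos n).ne']
    exact log_le_log (mul_pos (hpos m) (hpos n)) (by exact_mod_cast alphaOf_strongPow_mul_le m n)

theorem log_rhoOf_strongPow_div_le (n : ℕ) :
    log (rhoOf (strongPow E n)) / n ≤ log (Fintype.card V) := by
  rcases n.eq_zero_or_pos with rfl | hn
  · simpa using log_natCast_nonneg _
  rw [div_le_iff₀ (by exact_mod_cast hn)]
  have h := rhoOf_le_card (strongPow E n)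
  rw [Fintype.card_fun, Fintype.card_fin] at h
  calc log (rhoOf (strongPow E n)) ≤ log ((Fintype.card V ^ n : ℕ)) :=
        log_natCast_le_log_natCast h
    _ = log (Fintype.card V) * n := by rw [Nat.cast_pow, log_pow, mul_comm]

theorem mul_log_rhoOf_strongPow_le (m : ℕ) {k : ℕ} (hk : 0 < k) :
    k * log (rhoOf (strongPow E m)) ≤
      log k + log (rhoOf (strongPow E m)) + log (alphaOf (strongPow E (k * m))) := by
  have h := rhoOf_strongPow_pow_le (E := E) m hk
  rcases (rhoOf (strongPow E m)).eq_zero_or_pos with hr | hr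
  · rw [hr, Nat.cast_zero, log_zero, mul_zero, add_zero]
    exact add_nonneg (log_natCast_nonneg k) (log_natCast_nonneg _)
  have ha : 0 < alphaOf (strongPow E (k * m)) :=
    Nat.pos_of_ne_zero fun ha => by simp [ha] at h; exact hr.ne' h.1
  rw [← log_pow, ← log_mul (by positivity) (by positivity),
    ← log_mul (by positivity) (by positivity)]
  exact log_le_log (by positivity) (by exact_mod_cast h)

end Logarithms

section Fekete

variable {x y : ℕ → ℝ}

theorem BddAbove.setOf_div (h : BddAbove (Set.range fun n => y n / n)) :
    BddAbove {t | ∃ n, 1 ≤ n ∧ t = y n / n} :=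
  h.mono (by rintro _ ⟨n, -, rfl⟩; exact ⟨n, rfl⟩)

theorem tendsto_div_sSup_of_superadditive (hy : ∀ m n, y m + y n ≤ y (m + n))
    (hbdd : BddAbove (Set.range fun n => y n / n)) :
    Tendsto (fun n => y n / n) atTop (𝓝 (sSup {t | ∃ n, 1 ≤ n ∧ t = y n / n})) := by
  have hsub : Subadditive (-y) := fun m n => by simp only [Pi.neg_apply]; linarith [hy m n]
  have hbdd' : BddBelow (Set.range fun n => (-y) n / n) := by
    obtain ⟨c, hc⟩ := hbdd
    refine ⟨-c, ?_⟩
    rintro _ ⟨n, rfl⟩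
    simp only [Pi.neg_apply, neg_div, neg_le_neg_iff]
    exact hc ⟨n, rfl⟩
  have hlim : Tendsto (fun n => y n / n) atTop (𝓝 (-hsub.lim)) := by
    simpa [neg_div] using (hsub.tendsto_lim hbdd').neg
  have hle : ∀ n, 1 ≤ n → y n / n ≤ -hsub.lim := fun n hn => by
    have := hsub.lim_le_div hbdd' (n := n) (by omega)
    simp only [Pi.neg_apply, neg_div] at this
    linarith
  convert hlim using 2
  refine le_antisymm (csSup_le ⟨_, 1, le_rfl, rfl⟩ fun _ ⟨n, hn, h⟩ => h ▸ hle n hn) ?_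
  exact le_of_tendsto hlim
    (eventually_atTop.2 ⟨1, fun n hn => le_csSup hbdd.setOf_div ⟨n, hn, rfl⟩⟩)

theorem div_le_of_mul_le_log_add {L : ℝ} {m : ℕ} (hm : 0 < m) (hL : ∀ n, 1 ≤ n → y n / n ≤ L)
    (hxy : ∀ k : ℕ, 0 < k → (k : ℝ) * x m ≤ log k + x m + y (k * m)) : x m / m ≤ L := by
  have hm' : (0 : ℝ) < m := by exact_mod_cast hm
  have hbound : ∀ k : ℕ, 0 < k → x m / m ≤ (log k / k + x m / k) / m + L := by
    intro k hk
    have hk' : (0 : ℝ) < k := by exact_mod_cast hk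
    have h := hL (k * m) (Nat.one_le_iff_ne_zero.mpr (Nat.mul_pos hk hm).ne')
    have h' := div_le_div_of_nonneg_right (hxy k hk) (mul_pos hk' hm').le
    calc x m / m = k * x m / (k * m) := by field_simp
      _ ≤ (log k + x m + y (k * m)) / (k * m) := h'
      _ = (log k / k + x m / k) / m + y (k * m) / (k * m) := by field_simp
      _ ≤ (log k / k + x m / k) / m + L := by push_cast at h; linarith
  have hlog : Tendsto (fun k : ℕ => log k / k) atTop (𝓝 0) :=
    isLittleO_log_id_atTop.tendsto_div_nhds_zero.comp tendsto_natCast_atTop_atTop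
  have hlim : Tendsto (fun k : ℕ => (log k / k + x m / k) / m + L) atTop (𝓝 L) := by
    simpa using ((hlog.add (tendsto_const_div_atTop_nhds_zero_nat (x m))).div_const m).add_const L
  exact ge_of_tendsto hlim (eventually_atTop.2 ⟨1, hbound⟩)

theorem tendsto_div_and_sSup_eq_of_mul_le_log_add (hyx : ∀ n, y n ≤ x n)
    (hy : ∀ m n, y m + y n ≤ y (m + n)) (hx : BddAbove (Set.range fun n => x n / n))
    (hxy : ∀ m k : ℕ, 0 < k → (k : ℝ) * x m ≤ log k + x m + y (k * m)) :
    Tendsto (fun n => x n / n) atTop (𝓝 (sSup {t | ∃ n, 1 ≤ n ∧ t = y n / n})) ∧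
      sSup {t | ∃ n, 1 ≤ n ∧ t = y n / n} = sSup {t | ∃ n, 1 ≤ n ∧ t = x n / n} := by
  have hdiv (n : ℕ) : y n / n ≤ x n / n := div_le_div_of_nonneg_right (hyx n) n.cast_nonneg
  have hbdd : BddAbove (Set.range fun n => y n / n) := by
    obtain ⟨c, hc⟩ := hx
    exact ⟨c, by rintro _ ⟨n, rfl⟩; exact (hdiv n).trans (hc ⟨n, rfl⟩)⟩
  have hyL := tendsto_div_sSup_of_superadditive hy hbdd
  have hxL (m : ℕ) (hm : 1 ≤ m) : x m / m ≤ sSup {t | ∃ n, 1 ≤ n ∧ t = y n / n} :=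
    div_le_of_mul_le_log_add hm (fun n hn => le_csSup hbdd.setOf_div ⟨n, hn, rfl⟩) (hxy m)
  refine ⟨tendsto_of_tendsto_of_tendsto_of_le_of_le' hyL tendsto_const_nhds
    (Eventually.of_forall hdiv) (eventually_atTop.2 ⟨1, hxL⟩), le_antisymm ?_ ?_⟩
  · refine csSup_le ⟨_, 1, le_rfl, rfl⟩ fun _ ⟨n, hn, h⟩ => h ▸ (hdiv n).trans ?_
    exact le_csSup hx.setOf_div ⟨n, hn, rfl⟩
  · exact csSup_le ⟨_, 1, le_rfl, rfl⟩ fun _ ⟨n, hn, h⟩ => h ▸ hxL n hn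

end Fekete

theorem spernerCap_eq_lim_rho_general {V : Type*} [Fintype V] (E : V → V → Prop) :
    Tendsto (fun n : ℕ => Real.log (rhoOf (strongPow E n)) / n) atTop
      (nhds (spernerCap E)) ∧
    spernerCap E =
      sSup {x : ℝ | ∃ n : ℕ, 1 ≤ n ∧ x = Real.log (rhoOf (strongPow E n)) / n} :=
  tendsto_div_and_sSup_eq_of_mul_le_log_add (fun _ => log_natCast_le_log_natCast alphaOf_le_rhoOf)
    log_alphaOf_strongPow_add_le ⟨_, Set.forall_mem_range.mpr log_rhoOf_strongPow_div_le⟩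
    fun m _ => mul_log_rhoOf_strongPow_le m

/-- The Sperner capacity can be computed via maximum acyclic induced subgraphs
of strong powers: `(1/n) log ρ(Gⁿ)` converges to `Σ(G)`, and `Σ(G)` equals the
supremum over `n ≥ 1` of `(1/n) log ρ(Gⁿ)`. -/
theorem spernerCap_eq_lim_rho {V : Type*} [Fintype V] (E : V → V → Prop)
    (hirr : ∀ x, ¬ E x x) :
    Tendsto (fun n : ℕ => Real.log (rhoOf (strongPow E n)) / n) atTop
      (nhds (spernerCap E)) ∧
    spernerCap E =
      sSup {x : ℝ | ∃ n : ℕ, 1 ≤ n ∧ x = Real.log (rhoOf (strongPow E n)) / n} :=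
  spernerCap_eq_lim_rho_general E
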